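/- For any two orthogonal projections P and Q and any density matrix σ on ℂ^d, one has |tr(P Q σ)| ≥ tr(P σ) − √(tr((1 − Q) σ)), where 1 denotes the identity matrix. -/

import Mathlib

open scoped ComplexOrder

/-!
A positive semidefinite `σ` makes `⟪X, Y⟫ = tr(Xᴴ Y σ)` a semi-inner product on matrices, and
`⟪X, X⟫ = tr(X σ)` when `X` is an orthogonal projection. Writing `tr(P Q σ) = tr(P σ) - ⟪P, 1 - Q⟫`,
Cauchy–Schwarz bounds the error term by `√(tr(P σ) tr((1 - Q) σ)) ≤ √(tr((1 - Q) σ))`,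
since `tr(P σ) ≤ tr σ = 1`.
-/

namespace Matrix

variable {n 𝕜 : Type*} [Fintype n] [RCLike 𝕜] {σ : Matrix n n 𝕜}

theorem PosSemidef.norm_trace_conjTranspose_mul_mul_sq_le (hσ : σ.PosSemidef)
    (A B : Matrix n n 𝕜) :
    ‖(Aᴴ * B * σ).trace‖ ^ 2 ≤
      RCLike.re (Aᴴ * A * σ).trace * RCLike.re (Bᴴ * B * σ).trace := by
  let := σ.toMatrixSeminormedAddCommGroup hσ
  let := σ.toMatrixInnerProductSpace hσ
  have hinner (X Y : Matrix n n 𝕜) : inner 𝕜 X Y = (Xᴴ * Y * σ).trace :=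
    (trace_mul_cycle Y σ Xᴴ).trans (by rw [Matrix.mul_assoc])
  have := inner_mul_inner_self_le (𝕜 := 𝕜) A B
  rwa [← inner_conj_symm B A, RCLike.norm_conj, ← sq, hinner, hinner, hinner] at this

theorem PosSemidef.re_trace_conjTranspose_mul_mul_nonneg (hσ : σ.PosSemidef)
    (A : Matrix n n 𝕜) : 0 ≤ RCLike.re (Aᴴ * A * σ).trace := by
  rw [← trace_mul_cycle A σ Aᴴ]
  exact RCLike.nonneg_iff.mp (hσ.mul_mul_conjTranspose_same A).trace_nonneg |>.1

end Matrix

namespace IsStarProjection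

open Matrix

variable {n 𝕜 : Type*} [Fintype n] [RCLike 𝕜] {P R σ : Matrix n n 𝕜}

theorem conjTranspose_eq (hP : IsStarProjection P) : Pᴴ = P :=
  hP.isSelfAdjoint

theorem conjTranspose_mul_self (hP : IsStarProjection P) : Pᴴ * P = P := by
  rw [hP.conjTranspose_eq, hP.isIdempotentElem.eq]

theorem re_trace_mul_nonneg (hP : IsStarProjection P) (hσ : σ.PosSemidef) :
    0 ≤ RCLike.re (P * σ).trace :=
  hP.conjTranspose_mul_self ▸ hσ.re_trace_conjTranspose_mul_mul_nonneg P

theorem re_trace_mul_le [DecidableEq n] (hP : IsStarProjection P) (hσ : σ.PosSemidef) :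
    RCLike.re (P * σ).trace ≤ RCLike.re σ.trace := by
  have hsplit : (P * σ).trace + ((1 - P) * σ).trace = σ.trace := by
    rw [← trace_add, ← add_mul, add_sub_cancel, Matrix.one_mul]
  have := hP.one_sub.re_trace_mul_nonneg hσ
  rw [← hsplit, map_add]
  linarith

theorem norm_trace_mul_mul_sq_le (hP : IsStarProjection P) (hR : IsStarProjection R)
    (hσ : σ.PosSemidef) :
    ‖(P * R * σ).trace‖ ^ 2 ≤ RCLike.re (P * σ).trace * RCLike.re (R * σ).trace := by
  have := hσ.norm_trace_conjTranspose_mul_mul_sq_le P R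
  rwa [hP.conjTranspose_mul_self, hR.conjTranspose_mul_self, hP.conjTranspose_eq] at this

end IsStarProjection

open Matrix in
/-- For orthogonal projections `P`, `Q` and a density matrix `σ` on `ℂ^d`:
`|tr(P Q σ)| ≥ tr(P σ) − √(tr((1 − Q) σ))`. -/
theorem abs_trace_proj_proj_ge (d : ℕ) (P Q σ : Matrix (Fin d) (Fin d) ℂ)
    (hP : P.IsHermitian) (hP2 : P * P = P)
    (hQ : Q.IsHermitian) (hQ2 : Q * Q = Q)
    (hσ : σ.PosSemidef) (htr : σ.trace = 1) :
    ‖(P * Q * σ).trace‖ ≥ ((P * σ).trace).re - Real.sqrt (((1 - Q) * σ).trace).re := by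
  have hPproj : IsStarProjection P := ⟨hP2, hP⟩
  have hRproj : IsStarProjection (1 - Q) := IsStarProjection.one_sub ⟨hQ2, hQ⟩
  have hPσ_le_one : (P * σ).trace.re ≤ 1 := by
    simpa [htr] using hPproj.re_trace_mul_le hσ
  have hCS : ‖(P * (1 - Q) * σ).trace‖ ≤ Real.sqrt (((1 - Q) * σ).trace).re := by
    refine Real.le_sqrt_of_sq_le ?_
    calc ‖(P * (1 - Q) * σ).trace‖ ^ 2
        ≤ (P * σ).trace.re * ((1 - Q) * σ).trace.re := hPproj.norm_trace_mul_mul_sq_le hRproj hσ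
      _ ≤ 1 * ((1 - Q) * σ).trace.re :=
          mul_le_mul_of_nonneg_right hPσ_le_one (hRproj.re_trace_mul_nonneg hσ)
      _ = ((1 - Q) * σ).trace.re := one_mul _
  have hsplit : (P * Q * σ).trace.re = (P * σ).trace.re - (P * (1 - Q) * σ).trace.re := by
    rw [mul_sub, mul_one, sub_mul, trace_sub, Complex.sub_re, sub_sub_cancel]
  calc ‖(P * Q * σ).trace‖
      ≥ (P * σ).trace.re - (P * (1 - Q) * σ).trace.re := hsplit ▸ Complex.re_le_norm _
    _ ≥ (P * σ).trace.re - ‖(P * (1 - Q) * σ).trace‖ := by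
        gcongr; exact Complex.re_le_norm _
    _ ≥ (P * σ).trace.re - Real.sqrt (((1 - Q) * σ).trace).re := by gcongr
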